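/- With the ordinal |β|_≺ := [β] + λ_1 Σ_{n≠0}|n|β(n) + λ_2 β(0) (1 > λ_1 > λ_2 > 0): if populated multi-indices β_1, ..., β_{k+1} satisfy e_k + β_1 + ... + β_{k+1} = β, then |β_i|_≺ < |β|_≺ for each i = 1, ..., k+1. -/
import Mathlib


/-- Nonzero spatial multi-indices `n ∈ ℕ₀^{1+d} \ {0}`. -/
abbrev SpatialIdx (d : ℕ) := {n : Fin (d + 1) →₀ ℕ // n ≠ 0}

/-- Multi-indices `β : ℕ₀ ∪ (ℕ₀^{1+d} \ {0}) → ℕ₀`, finitely supported. -/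
abbrev MultiIndex (d : ℕ) := (ℕ ⊕ SpatialIdx d) →₀ ℕ

/-- The parabolic degree `|n| = 2 n₀ + n₁ + ⋯ + n_d` of a spatial multi-index. -/
def pdeg {d : ℕ} (n : Fin (d + 1) →₀ ℕ) : ℕ :=
  n 0 + n.sum fun _ k => k

/-- `[β] := Σ_k k β(k) − Σ_{n≠0} β(n)`. -/
def noiseHom {d : ℕ} (β : MultiIndex d) : ℤ :=
  β.sum fun i m =>
    match i with
    | Sum.inl k => (k : ℤ) * (m : ℤ)
    | Sum.inr _ => -(m : ℤ)

/-- The polynomial contribution `Σ_{n≠0} |n| β(n)` to the homogeneity. -/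
def polyDeg {d : ℕ} (β : MultiIndex d) : ℕ :=
  β.sum fun i m =>
    match i with
    | Sum.inl _ => 0
    | Sum.inr n => pdeg n.1 * m

/-- The homogeneity `|β| := α(1 + [β]) + Σ_{n≠0} |n| β(n)`. -/
noncomputable def hom {d : ℕ} (α : ℝ) (β : MultiIndex d) : ℝ :=
  α * (1 + (noiseHom β : ℝ)) + (polyDeg β : ℝ)

/-- `β` is populated if `[β] ≥ 0` or `β = e_n` for some `n ≠ 0` (purely polynomial). -/
def Populated {d : ℕ} (β : MultiIndex d) : Prop :=
  0 ≤ noiseHom β ∨ ∃ n : SpatialIdx d, β = Finsupp.single (Sum.inr n) 1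

/-- The ordinal `|β|_≺ := [β] + λ₁ Σ_{n≠0} |n| β(n) + λ₂ β(k=0)`. -/
noncomputable def ordFn {d : ℕ} (lam1 lam2 : ℝ) (β : MultiIndex d) : ℝ :=
  (noiseHom β : ℝ) + lam1 * (polyDeg β : ℝ) + lam2 * (β (Sum.inl 0) : ℝ)

lemma noiseHom_add {d : ℕ} (a b : MultiIndex d) : noiseHom (a + b) = noiseHom a + noiseHom b := by
  unfold noiseHom
  apply Finsupp.sum_add_index
  · intro i _; cases i <;> simp
  · intro i _ m1 m2; cases i <;> push_cast <;> ring

lemma polyDeg_add {d : ℕ} (a b : MultiIndex d) : polyDeg (a + b) = polyDeg a + polyDeg b := by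
  unfold polyDeg
  apply Finsupp.sum_add_index
  · intro i _; cases i <;> simp
  · intro i _ m1 m2; cases i <;> simp <;> ring

lemma ordFn_add {d : ℕ} (lam1 lam2 : ℝ) (a b : MultiIndex d) :
    ordFn lam1 lam2 (a + b) = ordFn lam1 lam2 a + ordFn lam1 lam2 b := by
  unfold ordFn
  rw [noiseHom_add, polyDeg_add]
  push_cast [Finsupp.add_apply]
  ring

lemma noiseHom_single {d : ℕ} (i : ℕ ⊕ SpatialIdx d) (m : ℕ) :
    noiseHom (Finsupp.single i m) =
      match i with
      | Sum.inl k => (k : ℤ) * m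
      | Sum.inr _ => -(m : ℤ) := by
  unfold noiseHom
  rw [Finsupp.sum_single_index]
  cases i <;> simp

lemma polyDeg_single {d : ℕ} (i : ℕ ⊕ SpatialIdx d) (m : ℕ) :
    polyDeg (Finsupp.single i m) =
      match i with
      | Sum.inl _ => 0
      | Sum.inr n => pdeg n.1 * m := by
  unfold polyDeg
  rw [Finsupp.sum_single_index]
  cases i <;> simp

lemma pdeg_pos {d : ℕ} (n : Fin (d + 1) →₀ ℕ) (hn : n ≠ 0) : 1 ≤ pdeg n := by
  obtain ⟨j, hj⟩ : ∃ j, n j ≠ 0 := by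
    by_contra h; push_neg at h; exact hn (Finsupp.ext fun j => h j)
  have hj' : j ∈ n.support := Finsupp.mem_support_iff.mpr hj
  have : n j ≤ n.sum fun _ k => k :=
    Finset.single_le_sum (fun i _ => Nat.zero_le (n i)) hj'
  unfold pdeg; omega

lemma ordFn_pop {d : ℕ} (lam1 lam2 : ℝ) (h2 : 0 < lam2) (h12 : lam2 < lam1) (h1 : lam1 < 1)
    (β : MultiIndex d) (h : Populated β) : lam1 - 1 ≤ ordFn lam1 lam2 β := by
  rcases h with h | ⟨n, rfl⟩
  · have : (0:ℝ) ≤ (noiseHom β : ℝ) := by exact_mod_cast h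
    have hl1 : (0:ℝ) < lam1 := h2.trans h12
    have h3 : (0:ℝ) ≤ lam1 * (polyDeg β : ℝ) := by positivity
    have h4 : (0:ℝ) ≤ lam2 * (β (Sum.inl 0) : ℝ) := by positivity
    unfold ordFn; nlinarith
  · unfold ordFn
    rw [noiseHom_single, polyDeg_single]
    have hp : (1:ℝ) ≤ (pdeg n.1 : ℝ) := by exact_mod_cast pdeg_pos n.1 n.2
    simp only [Finsupp.single_apply]
    have : (Sum.inr n : ℕ ⊕ SpatialIdx d) ≠ Sum.inl 0 := by simp
    simp [Finsupp.single_apply]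
    nlinarith

lemma ordFn_zero {d : ℕ} (lam1 lam2 : ℝ) : ordFn lam1 lam2 (0 : MultiIndex d) = 0 := by
  unfold ordFn noiseHom polyDeg
  simp [Finsupp.sum_zero_index]

lemma ordFn_sum {d : ℕ} (lam1 lam2 : ℝ) {ι : Type*} (s : Finset ι) (f : ι → MultiIndex d) :
    ordFn lam1 lam2 (∑ j ∈ s, f j) = ∑ j ∈ s, ordFn lam1 lam2 (f j) := by
  induction s using Finset.cons_induction with
  | empty => simp [ordFn_zero]
  | cons a s ha ih => rw [Finset.sum_cons, Finset.sum_cons, ordFn_add, ih]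


/-- Triangularity of products: if populated multi-indices `β₁, …, β_{k+1}` satisfy
`e_k + β₁ + ⋯ + β_{k+1} = β`, then `|β_i|_≺ < |β|_≺` for each `i`. -/
theorem ord_triangular_product {d : ℕ} (lam1 lam2 : ℝ)
    (h2 : 0 < lam2) (h12 : lam2 < lam1) (h1 : lam1 < 1)
    (k : ℕ) (B : Fin (k + 1) → MultiIndex d) (β : MultiIndex d)
    (hpop : ∀ i, Populated (B i))
    (hsum : Finsupp.single (Sum.inl k) 1 + ∑ i, B i = β) :
    ∀ i, ordFn lam1 lam2 (B i) < ordFn lam1 lam2 β := by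
  intro i
  have hβ : ordFn lam1 lam2 β =
      ordFn lam1 lam2 (Finsupp.single (Sum.inl k) 1 : MultiIndex d) + ∑ j, ordFn lam1 lam2 (B j) := by
    rw [← hsum, ordFn_add, ordFn_sum]
  have hek : ordFn lam1 lam2 (Finsupp.single (Sum.inl k) 1 : MultiIndex d) =
      (k : ℝ) + lam2 * (if k = 0 then 1 else 0) := by
    unfold ordFn
    rw [noiseHom_single, polyDeg_single]
    simp [Finsupp.single_apply, Sum.inl.injEq]
  have hsplit : ∑ j, ordFn lam1 lam2 (B j)
      = ordFn lam1 lam2 (B i) + ∑ j ∈ Finset.univ.erase i, ordFn lam1 lam2 (B j) := by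
    exact (Finset.add_sum_erase _ _ (Finset.mem_univ i)).symm
  have hcard : (Finset.univ.erase i).card = k := by
    rw [Finset.card_erase_of_mem (Finset.mem_univ i)]
    simp
  have hlb : (k : ℝ) * (lam1 - 1) ≤ ∑ j ∈ Finset.univ.erase i, ordFn lam1 lam2 (B j) := by
    calc (k : ℝ) * (lam1 - 1)
        = (Finset.univ.erase i).card • (lam1 - 1) := by rw [hcard]; simp [nsmul_eq_mul]
      _ ≤ ∑ j ∈ Finset.univ.erase i, ordFn lam1 lam2 (B j) :=
        Finset.card_nsmul_le_sum _ _ _ (fun j _ => ordFn_pop lam1 lam2 h2 h12 h1 (B j) (hpop j))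
  rw [hβ, hsplit, hek]
  rcases Nat.eq_zero_or_pos k with hk | hk
  · subst hk; simp at hlb ⊢; nlinarith
  · have hk' : (1:ℝ) ≤ (k:ℝ) := by exact_mod_cast hk
    simp [Nat.pos_iff_ne_zero.mp hk]
    nlinarith
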